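/- Let A be a noetherian commutative ring graded by an abelian group ι, and let 𝔮 be a primary ideal of A. Then the homogeneous core 𝔮* is a G-primary homogeneous ideal, and its G-radical satisfies (√(𝔮*))* = (√𝔮)*. -/
import Mathlib

/-- A homogeneous ideal `Q` of a graded ring `A` is `G`-primary if `Q ≠ A` and for all
homogeneous ideals `I`, `J` with `I·J ⊆ Q` and `J ⊄ Q`, one has `I ⊆ (√Q)*`, the homogeneous
core of the radical of `Q` (the `G`-radical of `Q`). -/
def Ideal.IsGPrimary {ι : Type*} [AddCommGroup ι] [DecidableEq ι] {A : Type*} [CommRing A]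
    (𝒜 : ι → AddSubgroup A) [GradedRing 𝒜] (Q : Ideal A) : Prop :=
  Q ≠ ⊤ ∧ ∀ I J : Ideal A, I.IsHomogeneous 𝒜 → J.IsHomogeneous 𝒜 →
    I * J ≤ Q → ¬ J ≤ Q → I ≤ (Q.radical.homogeneousCore 𝒜).toIdeal

lemma le_homogeneousCore_of_isHomogeneous {ι : Type*} [AddCommGroup ι] [DecidableEq ι]
    {A : Type*} [CommRing A] (𝒜 : ι → AddSubgroup A) [GradedRing 𝒜] {I J : Ideal A}
    (hI : I.IsHomogeneous 𝒜) (h : I ≤ J) : I ≤ (J.homogeneousCore 𝒜).toIdeal := by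
  conv_lhs => rw [← hI.toIdeal_homogeneousCore_eq_self]
  exact Ideal.homogeneousCore'_mono 𝒜 h

lemma radical_core_core_eq {ι : Type*} [AddCommGroup ι] [DecidableEq ι]
    {A : Type*} [CommRing A] (𝒜 : ι → AddSubgroup A) [GradedRing 𝒜] (𝔮 : Ideal A) :
    ((((𝔮.homogeneousCore 𝒜).toIdeal).radical).homogeneousCore 𝒜).toIdeal
      = (𝔮.radical.homogeneousCore 𝒜).toIdeal := by
  apply le_antisymm
  · exact Ideal.homogeneousCore'_mono 𝒜
      (Ideal.radical_mono (Ideal.toIdeal_homogeneousCore_le 𝒜 𝔮))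
  · apply le_homogeneousCore_of_isHomogeneous 𝒜 (Ideal.homogeneousCore 𝒜 𝔮.radical).isHomogeneous
    -- (√𝔮)* ≤ √(𝔮*)
    show Ideal.homogeneousCore' 𝒜 𝔮.radical ≤ _
    rw [Ideal.homogeneousCore', Ideal.span_le]
    rintro _ ⟨⟨x, hx⟩, hmem, rfl⟩
    obtain ⟨n, hn⟩ := hmem
    obtain ⟨i, hi⟩ := hx
    exact ⟨n, Ideal.mem_homogeneousCore_of_homogeneous_of_mem
      ⟨n • i, SetLike.pow_mem_graded n hi⟩ hn⟩

/-- If `𝔮` is a primary ideal of a noetherian graded ring `A`, then its homogeneous core `𝔮*`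
is a `G`-primary homogeneous ideal, and its `G`-radical satisfies `(√(𝔮*))* = (√𝔮)*`. -/
theorem Ideal.IsPrimary.homogeneousCore_isGPrimary {ι : Type*} [AddCommGroup ι]
    [DecidableEq ι] {A : Type*} [CommRing A] [IsNoetherianRing A]
    (𝒜 : ι → AddSubgroup A) [GradedRing 𝒜] (𝔮 : Ideal A) (h𝔮 : 𝔮.IsPrimary) :
    ((𝔮.homogeneousCore 𝒜).toIdeal).IsGPrimary 𝒜 ∧
      ((((𝔮.homogeneousCore 𝒜).toIdeal).radical).homogeneousCore 𝒜).toIdeal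
        = (𝔮.radical.homogeneousCore 𝒜).toIdeal := by
  rw [Ideal.isPrimary_iff] at h𝔮
  have hle : (𝔮.homogeneousCore 𝒜).toIdeal ≤ 𝔮 := Ideal.toIdeal_homogeneousCore_le 𝒜 𝔮
  have key := radical_core_core_eq 𝒜 𝔮
  refine ⟨⟨?_, ?_⟩, key⟩
  · intro htop
    exact h𝔮.1 (top_le_iff.mp (htop ▸ hle))
  · intro I J hI hJ hmul hJnot
    have hJq : ¬ J ≤ 𝔮 := fun h => hJnot (le_homogeneousCore_of_isHomogeneous 𝒜 hJ h)
    obtain ⟨b, hbJ, hb𝔮⟩ := SetLike.not_le_iff_exists.mp hJq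
    have hIrad : I ≤ 𝔮.radical := by
      intro a ha
      have hba : b * a ∈ 𝔮 := by
        rw [mul_comm]; exact hle (hmul (Ideal.mul_mem_mul ha hbJ))
      exact (h𝔮.2 hba).resolve_left hb𝔮
    rw [key]
    exact le_homogeneousCore_of_isHomogeneous 𝒜 hI hIrad
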